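/- Let H₁ and H₂ be real Hilbert spaces, K : H₁ → H₂ a continuous linear operator, f ∈ H₂ nonzero, and suppose (γ_j, v_j, β_j, p_j)_{j≥1} is a non-terminating Golub–Kahan bidiagonalization (GKB) process for (K, f). Then for every k ≥ 1, the linear span of {p₁, …, p_k} equals the Krylov subspace spanned by {(K*K)^j (K* f) : 0 ≤ j ≤ k−1}, and the linear span of {v₁, …, v_k} equals the Krylov subspace spanned by {(K K*)^j f : 0 ≤ j ≤ k−1}. -/

import Mathlib

open Filter ContinuousLinearMap

/-- A non-terminating Golub–Kahan bidiagonalization (GKB) process for `(K, f)`.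
Index `j : ℕ` corresponds to the `(j+1)`-st element of the process in the paper
(i.e. `γ 0 = γ₁`, `v 0 = v₁`, etc.). All coefficients are strictly positive. -/
structure GKB {H₁ H₂ : Type*}
    [NormedAddCommGroup H₁] [InnerProductSpace ℝ H₁] [CompleteSpace H₁]
    [NormedAddCommGroup H₂] [InnerProductSpace ℝ H₂] [CompleteSpace H₂]
    (K : H₁ →L[ℝ] H₂) (f : H₂)
    (γ β : ℕ → ℝ) (v : ℕ → H₂) (p : ℕ → H₁) : Prop where
  γ_pos : ∀ j, 0 < γ j
  β_pos : ∀ j, 0 < β j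
  γ_zero : γ 0 = ‖f‖
  v_zero : γ 0 • v 0 = f
  β_zero : β 0 = ‖adjoint K (v 0)‖
  p_zero : β 0 • p 0 = adjoint K (v 0)
  γ_succ : ∀ j, γ (j + 1) = ‖K (p j) - β j • v j‖
  v_succ : ∀ j, γ (j + 1) • v (j + 1) = K (p j) - β j • v j
  β_succ : ∀ j, β (j + 1) = ‖adjoint K (v (j + 1)) - γ (j + 1) • p j‖
  p_succ : ∀ j, β (j + 1) • p (j + 1) = adjoint K (v (j + 1)) - γ (j + 1) • p j

/-!
Everything follows from the three-term recurrences: `K p_i ∈ span {v_i, v_{i+1}}` and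
`K* v_i ∈ span {p_{i-1}, p_i}`, so `K` maps `span {p_j : j < n}` into `span {v_j : j ≤ n}` and
`K*` maps `span {v_j : j < n}` into `span {p_j : j < n}`. The Krylov vectors
`w_j = (K K*)^j f` and `q_j = (K* K)^j K* f` satisfy the same mapping properties, since
`K q_j = w_{j+1}` and `K* w_j = q_j`. An interleaved induction then puts `v_n, p_n` into the
Krylov spaces of order `n + 1` (dividing by `γ_{n+1}, β_{n+1} > 0`) and, conversely, `w_n, q_n`
into the spans of the first `n + 1` GKB vectors; equal flags follow.
-/

open Set Submodule

namespace Submodule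

variable {R M N : Type*} [Semiring R] [AddCommMonoid M] [Module R M] [AddCommMonoid N]
  [Module R N]

theorem span_image_Iio_le_iff {s : ℕ → M} {S : Submodule R M} {n : ℕ} :
    span R (s '' Iio n) ≤ S ↔ ∀ i < n, s i ∈ S := by
  simp [span_le, subset_def]

theorem mem_span_image_Iio {s : ℕ → M} {i n : ℕ} (h : i < n) : s i ∈ span R (s '' Iio n) :=
  subset_span ⟨i, h, rfl⟩

theorem span_image_Iio_mono (s : ℕ → M) {m n : ℕ} (h : m ≤ n) :
    span R (s '' Iio m) ≤ span R (s '' Iio n) :=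
  span_mono (image_mono (Iio_subset_Iio h))

theorem apply_mem_of_mem_span_image_Iio {G : Type*} [FunLike G M N] [LinearMapClass G R M N]
    (T : G) {s : ℕ → M} {n : ℕ} {S : Submodule R N} (h : ∀ i < n, T (s i) ∈ S) {x : M}
    (hx : x ∈ span R (s '' Iio n)) : T x ∈ S :=
  span_image_Iio_le_iff (S := S.comap (T : M →ₗ[R] N)) |>.2 h hx

theorem span_image_Iio_eq_of_forall_mem {s t : ℕ → M}
    (hs : ∀ i, s i ∈ span R (t '' Iio (i + 1))) (ht : ∀ i, t i ∈ span R (s '' Iio (i + 1)))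
    (n : ℕ) : span R (s '' Iio n) = span R (t '' Iio n) := by
  apply le_antisymm <;> refine span_image_Iio_le_iff.2 fun i hi ↦ span_image_Iio_mono _ hi ?_
  exacts [hs i, ht i]

end Submodule

namespace ContinuousLinearMap

variable {R E F : Type*} [Semiring R] [TopologicalSpace E] [AddCommMonoid E] [Module R E]
  [TopologicalSpace F] [AddCommMonoid F] [Module R F]

theorem apply_pow_comp_apply (A : E →L[R] F) (B : F →L[R] E) (n : ℕ) (x : E) :
    A (((B ∘L A) ^ n) x) = ((A ∘L B) ^ n) (A x) := by
  induction n generalizing x with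
  | zero => rfl
  | succ n ih => rw [pow_succ, mul_apply_eq_comp, ih]; rfl

theorem apply_mem_span_krylov_succ (A : E →L[R] F) (B : F →L[R] E) (g : F) {n : ℕ} {x : E}
    (hx : x ∈ span R ((fun j ↦ ((B ∘L A) ^ j) (B g)) '' Iio n)) :
    A x ∈ span R ((fun j ↦ ((A ∘L B) ^ j) g) '' Iio (n + 1)) := by
  refine apply_mem_of_mem_span_image_Iio A (fun i hi ↦ ?_) hx
  rw [A.apply_pow_comp_apply, ← comp_apply A B g, ← mul_apply_eq_comp, ← pow_succ]
  exact mem_span_image_Iio (by omega)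

theorem apply_mem_span_krylov (A : E →L[R] F) (B : F →L[R] E) (g : F) {n : ℕ} {x : F}
    (hx : x ∈ span R ((fun j ↦ ((A ∘L B) ^ j) g) '' Iio n)) :
    B x ∈ span R ((fun j ↦ ((B ∘L A) ^ j) (B g)) '' Iio n) := by
  refine apply_mem_of_mem_span_image_Iio B (fun i hi ↦ ?_) hx
  rw [B.apply_pow_comp_apply]
  exact mem_span_image_Iio hi

end ContinuousLinearMap

namespace GKB

variable {H₁ H₂ : Type*} [NormedAddCommGroup H₁] [InnerProductSpace ℝ H₁] [CompleteSpace H₁]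
  [NormedAddCommGroup H₂] [InnerProductSpace ℝ H₂] [CompleteSpace H₂]
  {K : H₁ →L[ℝ] H₂} {f : H₂} {γ β : ℕ → ℝ} {v : ℕ → H₂} {p : ℕ → H₁}

theorem apply_p (h : GKB K f γ β v p) (i : ℕ) : K (p i) = γ (i + 1) • v (i + 1) + β i • v i :=
  sub_eq_iff_eq_add.1 (h.v_succ i).symm

theorem adjoint_apply_v_succ (h : GKB K f γ β v p) (i : ℕ) :
    adjoint K (v (i + 1)) = β (i + 1) • p (i + 1) + γ (i + 1) • p i :=
  sub_eq_iff_eq_add.1 (h.p_succ i).symm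

theorem adjoint_apply_f (h : GKB K f γ β v p) : adjoint K f = (γ 0 * β 0) • p 0 := by
  rw [← h.v_zero, map_smul, ← h.p_zero, smul_smul]

theorem apply_mem_span_v (h : GKB K f γ β v p) {n : ℕ} {x : H₁}
    (hx : x ∈ span ℝ (p '' Iio n)) : K x ∈ span ℝ (v '' Iio (n + 1)) := by
  refine apply_mem_of_mem_span_image_Iio K (fun i hi ↦ ?_) hx
  rw [h.apply_p]
  exact add_mem (smul_mem _ _ (mem_span_image_Iio (by omega)))
    (smul_mem _ _ (mem_span_image_Iio (by omega)))

theorem adjoint_apply_mem_span_p (h : GKB K f γ β v p) {n : ℕ} {x : H₂}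
    (hx : x ∈ span ℝ (v '' Iio n)) : adjoint K x ∈ span ℝ (p '' Iio n) := by
  refine apply_mem_of_mem_span_image_Iio (adjoint K) (fun i hi ↦ ?_) hx
  cases i with
  | zero =>
    rw [← h.p_zero]
    exact smul_mem _ _ (mem_span_image_Iio hi)
  | succ i =>
    rw [h.adjoint_apply_v_succ]
    exact add_mem (smul_mem _ _ (mem_span_image_Iio hi))
      (smul_mem _ _ (mem_span_image_Iio (by omega)))

theorem mem_span_krylov (h : GKB K f γ β v p) (n : ℕ) :
    v n ∈ span ℝ ((fun j ↦ ((K ∘L adjoint K) ^ j) f) '' Iio (n + 1)) ∧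
      p n ∈ span ℝ ((fun j ↦ ((adjoint K ∘L K) ^ j) (adjoint K f)) '' Iio (n + 1)) := by
  induction n with
  | zero =>
    constructor
    · refine (smul_mem_iff _ (h.γ_pos 0).ne').1 ?_
      rw [h.v_zero]
      exact mem_span_image_Iio (s := fun j ↦ ((K ∘L adjoint K) ^ j) f) zero_lt_one
    · refine (smul_mem_iff _ (mul_pos (h.γ_pos 0) (h.β_pos 0)).ne').1 ?_
      rw [← h.adjoint_apply_f]
      exact mem_span_image_Iio (s := fun j ↦ ((adjoint K ∘L K) ^ j) (adjoint K f)) zero_lt_one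
  | succ n ih =>
    have hv : v (n + 1) ∈ span ℝ ((fun j ↦ ((K ∘L adjoint K) ^ j) f) '' Iio (n + 1 + 1)) := by
      refine (smul_mem_iff _ (h.γ_pos (n + 1)).ne').1 ?_
      rw [h.v_succ]
      exact sub_mem (K.apply_mem_span_krylov_succ (adjoint K) f ih.2)
        (smul_mem _ _ (span_image_Iio_mono _ (n + 1).le_succ ih.1))
    refine ⟨hv, (smul_mem_iff _ (h.β_pos (n + 1)).ne').1 ?_⟩
    rw [h.p_succ]
    exact sub_mem (K.apply_mem_span_krylov (adjoint K) f hv)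
      (smul_mem _ _ (span_image_Iio_mono _ (n + 1).le_succ ih.2))

theorem krylov_mem_span (h : GKB K f γ β v p) (n : ℕ) :
    ((K ∘L adjoint K) ^ n) f ∈ span ℝ (v '' Iio (n + 1)) := by
  induction n with
  | zero =>
    rw [pow_zero, one_apply_eq_self, ← h.v_zero]
    exact smul_mem _ _ (mem_span_image_Iio zero_lt_one)
  | succ n ih =>
    rw [pow_succ', mul_apply_eq_comp, comp_apply]
    exact h.apply_mem_span_v (h.adjoint_apply_mem_span_p ih)

theorem adjoint_krylov_mem_span (h : GKB K f γ β v p) (n : ℕ) :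
    ((adjoint K ∘L K) ^ n) (adjoint K f) ∈ span ℝ (p '' Iio (n + 1)) := by
  rw [← apply_pow_comp_apply]
  exact h.adjoint_apply_mem_span_p (h.krylov_mem_span n)

end GKB

theorem stmt_3_general
    {H₁ H₂ : Type*}
    [NormedAddCommGroup H₁] [InnerProductSpace ℝ H₁] [CompleteSpace H₁]
    [NormedAddCommGroup H₂] [InnerProductSpace ℝ H₂] [CompleteSpace H₂]
    (K : H₁ →L[ℝ] H₂) (f : H₂)
    (γ β : ℕ → ℝ) (v : ℕ → H₂) (p : ℕ → H₁)
    (hGKB : GKB K f γ β v p) :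
    ∀ k : ℕ, 1 ≤ k →
      Submodule.span ℝ (p '' Set.Iio k) =
        Submodule.span ℝ
          ((fun j => ((adjoint K ∘L K) ^ j) (adjoint K f)) '' Set.Iio k) ∧
      Submodule.span ℝ (v '' Set.Iio k) =
        Submodule.span ℝ ((fun j => ((K ∘L adjoint K) ^ j) f) '' Set.Iio k) :=
  fun k _ ↦
    ⟨span_image_Iio_eq_of_forall_mem (fun i ↦ (hGKB.mem_span_krylov i).2)
        hGKB.adjoint_krylov_mem_span k,
      span_image_Iio_eq_of_forall_mem (fun i ↦ (hGKB.mem_span_krylov i).1)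
        hGKB.krylov_mem_span k⟩

/-- for every `k ≥ 1`, `span {p₁, …, p_k}` is the Krylov subspace
`span {(K*K)^j (K* f) : 0 ≤ j ≤ k−1}` and `span {v₁, …, v_k}` is the Krylov subspace
`span {(K K*)^j f : 0 ≤ j ≤ k−1}` (here `p j`, `v j` with `j < k` are the paper's
`p_{j+1}`, `v_{j+1}`). -/
theorem stmt_3
    {H₁ H₂ : Type*}
    [NormedAddCommGroup H₁] [InnerProductSpace ℝ H₁] [CompleteSpace H₁]
    [NormedAddCommGroup H₂] [InnerProductSpace ℝ H₂] [CompleteSpace H₂]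
    (K : H₁ →L[ℝ] H₂) (f : H₂) (hf : f ≠ 0)
    (γ β : ℕ → ℝ) (v : ℕ → H₂) (p : ℕ → H₁)
    (hGKB : GKB K f γ β v p) :
    ∀ k : ℕ, 1 ≤ k →
      Submodule.span ℝ (p '' Set.Iio k) =
        Submodule.span ℝ
          ((fun j => ((adjoint K ∘L K) ^ j) (adjoint K f)) '' Set.Iio k) ∧
      Submodule.span ℝ (v '' Set.Iio k) =
        Submodule.span ℝ ((fun j => ((K ∘L adjoint K) ^ j) f) '' Set.Iio k) :=
  stmt_3_general K f γ β v p hGKB
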